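/- arXiv:math/0501146 — 2 statements merged into one kernel-verified Lean document; each statement's English description precedes it below -/
import Mathlib

section
/- Every value N_d produced by the Kontsevich–Manin recursion is a positive integer: for all d ≥ 1, N_d ≥ 1. -/
/-- The Kontsevich–Manin numbers `N d` of rational plane curves of degree `d`
through `3d-1` general points: `N 1 = 1` and for `d ≥ 2`,
`N d = Σ_{a+b=d, a,b ≥ 1} N a * N b * (a²b² C(3d-4, 3a-2) - a³b C(3d-4, 3a-1))`. -/
def KMN : ℕ → ℤ
  | 0 => 0
  | 1 => 1
  | (d+2) =>
      ∑ a ∈ (Finset.Icc 1 (d+1)).attach,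
        KMN a * KMN (d + 2 - a) *
          (((a : ℕ) : ℤ)^2 * ((d + 2 - (a : ℕ) : ℕ) : ℤ)^2
              * (Nat.choose (3*(d+2) - 4) (3*(a : ℕ) - 2) : ℤ)
            - ((a : ℕ) : ℤ)^3 * ((d + 2 - (a : ℕ) : ℕ) : ℤ)
              * (Nat.choose (3*(d+2) - 4) (3*(a : ℕ) - 1) : ℤ))
  decreasing_by
  · have := (Finset.mem_Icc.mp a.2).2; omega
  · have := (Finset.mem_Icc.mp a.2).1; omega

private lemma one_le_mul' {x y : ℤ} (hx : 1 ≤ x) (hy : 1 ≤ y) : 1 ≤ x * y := by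
  nlinarith

/-- The key combinatorial inequality. -/
private lemma key_ineq (a b : ℕ) (ha : 1 ≤ a) (hb : 1 ≤ b) :
    0 < 2 * (a : ℤ) * b * ((3*a + 3*b - 4).choose (3*a - 2) : ℤ)
      - (a : ℤ)^2 * ((3*a + 3*b - 4).choose (3*a - 1) : ℤ)
      - (b : ℤ)^2 * ((3*a + 3*b - 4).choose (3*a - 3) : ℤ) := by
  set n := 3*a + 3*b - 4 with hn
  have h1n : n.choose (3*a - 1) * (3*a - 1) = n.choose (3*a - 2) * (3*b - 2) := by
    have := Nat.choose_succ_right_eq n (3*a - 2)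
    rw [show 3*a - 2 + 1 = 3*a - 1 by omega] at this
    rw [this, show n - (3*a-2) = 3*b - 2 by omega]
  have h2n : n.choose (3*a - 2) * (3*a - 2) = n.choose (3*a - 3) * (3*b - 1) := by
    have := Nat.choose_succ_right_eq n (3*a - 3)
    rw [show 3*a - 3 + 1 = 3*a - 2 by omega] at this
    rw [this, show n - (3*a-3) = 3*b - 1 by omega]
  have hCpos : 0 < n.choose (3*a - 2) := Nat.choose_pos (by omega)
  set C0 : ℤ := (n.choose (3*a - 2) : ℤ) with hC0d
  set C1 : ℤ := (n.choose (3*a - 1) : ℤ) with hC1d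
  set C2 : ℤ := (n.choose (3*a - 3) : ℤ) with hC2d
  set x : ℤ := (a : ℤ) with hxd
  set y : ℤ := (b : ℤ) with hyd
  clear_value C0 C1 C2 x y
  have hx : 1 ≤ x := by omega
  have hy : 1 ≤ y := by omega
  have hC0 : 1 ≤ C0 := by omega
  have h1 : C1 * (3*x - 1) = C0 * (3*y - 2) := by
    have := h1n
    zify at this
    rw [show ((3*a - 1 : ℕ) : ℤ) = 3*x - 1 by omega,
        show ((3*b - 2 : ℕ) : ℤ) = 3*y - 2 by omega] at this
    rw [hC1d, hC0d]; exact this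
  have h2 : C0 * (3*x - 2) = C2 * (3*y - 1) := by
    have := h2n
    zify at this
    rw [show ((3*a - 2 : ℕ) : ℤ) = 3*x - 2 by omega,
        show ((3*b - 1 : ℕ) : ℤ) = 3*y - 1 by omega] at this
    rw [hC0d, hC2d]; exact this
  clear hC0d hC1d hC2d hxd hyd h1n h2n hCpos hn
  clear n
  set E : ℤ := 2 * x * y * C0 - x^2 * C1 - y^2 * C2 with hEd
  have hident : (3*x - 1) * (3*y - 1) * E
      = C0 * (3*x^2*y + 3*x*y^2 + 2*x*y - 2*x^2 - 2*y^2) := by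
    rw [hEd]
    linear_combination (-(x^2) * (3*y - 1)) * h1 + (y^2 * (3*x - 1)) * h2
  have hpoly : 0 < C0 * (3*x^2*y + 3*x*y^2 + 2*x*y - 2*x^2 - 2*y^2) := by
    have h3 : (x + y)^2 ≤ 3*x^2*y + 3*x*y^2 + 2*x*y - 2*x^2 - 2*y^2 := by
      nlinarith [mul_nonneg (sq_nonneg x) (sub_nonneg.2 hy),
        mul_nonneg (sq_nonneg y) (sub_nonneg.2 hx)]
    nlinarith [sq_nonneg (x + y)]
  have hfac : 0 < (3*x - 1) * (3*y - 1) := by nlinarith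
  by_contra hE
  push_neg at hE
  have : (3*x - 1) * (3*y - 1) * E ≤ 0 :=
    mul_nonpos_of_nonneg_of_nonpos (le_of_lt hfac) hE
  linarith

private def gfun (m a : ℕ) : ℤ :=
  KMN a * KMN (m + 2 - a) *
    ((a : ℤ)^2 * ((m + 2 - a : ℕ) : ℤ)^2
        * (Nat.choose (3*(m+2) - 4) (3*a - 2) : ℤ)
      - (a : ℤ)^3 * ((m + 2 - a : ℕ) : ℤ)
        * (Nat.choose (3*(m+2) - 4) (3*a - 1) : ℤ))

theorem KMN_pos : ∀ d : ℕ, 1 ≤ d → 1 ≤ KMN d := by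
  intro d
  induction d using Nat.strong_induction_on with
  | _ d ih =>
    intro hd
    match d, hd with
    | 1, _ => rw [KMN]
    | (m+2), _ =>
      have hsum : KMN (m + 2) = ∑ a ∈ Finset.Icc 1 (m+1), gfun m a := by
        rw [KMN]
        exact Finset.sum_attach (Finset.Icc 1 (m+1)) (gfun m)
      have hpair : ∀ a ∈ Finset.Icc 1 (m+1), 1 ≤ gfun m a + gfun m (m + 2 - a) := by
        intro a hmem
        rw [Finset.mem_Icc] at hmem
        set b : ℕ := m + 2 - a with hbd
        have hab : a + b = m + 2 := by omega
        have ha1 : 1 ≤ a := hmem.1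
        have hb1 : 1 ≤ b := by omega
        have hKa : 1 ≤ KMN a := ih a (by omega) ha1
        have hKb : 1 ≤ KMN b := ih b (by omega) hb1
        have hba : m + 2 - b = a := by omega
        have hnab : 3*(m+2) - 4 = 3*a + 3*b - 4 := by omega
        set n := 3*a + 3*b - 4 with hnd
        have hsymm1 : n.choose (3*b - 2) = n.choose (3*a - 2) := by
          rw [show 3*b - 2 = n - (3*a - 2) by omega, Nat.choose_symm (by omega)]
        have hsymm2 : n.choose (3*b - 1) = n.choose (3*a - 3) := by
          rw [show 3*b - 1 = n - (3*a - 3) by omega, Nat.choose_symm (by omega)]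
        have hE := key_ineq a b ha1 hb1
        rw [← hnd] at hE
        have hgab : gfun m a + gfun m (m + 2 - a)
            = KMN a * KMN b * ((a : ℤ) * (b : ℤ)) *
              (2 * (a : ℤ) * b * (n.choose (3*a - 2) : ℤ)
                - (a : ℤ)^2 * (n.choose (3*a - 1) : ℤ)
                - (b : ℤ)^2 * (n.choose (3*a - 3) : ℤ)) := by
          rw [gfun, gfun]
          simp only [← hbd, hba, hnab, hsymm1, hsymm2]
          ring
        rw [hgab]
        exact one_le_mul' (one_le_mul' (one_le_mul' hKa hKb)
          (one_le_mul' (by omega) (by omega))) (by omega)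
      have hrefl : ∑ a ∈ Finset.Icc 1 (m+1), gfun m (m + 2 - a)
          = ∑ a ∈ Finset.Icc 1 (m+1), gfun m a := by
        refine Finset.sum_nbij' (fun a => m + 2 - a) (fun a => m + 2 - a)
          ?_ ?_ ?_ ?_ (fun a _ => rfl) <;>
          (intro a hmem; simp only [Finset.mem_Icc] at *; omega)
      have h2S : 2 * (∑ a ∈ Finset.Icc 1 (m+1), gfun m a)
          = ∑ a ∈ Finset.Icc 1 (m+1), (gfun m a + gfun m (m + 2 - a)) := by
        rw [Finset.sum_add_distrib, hrefl]; ring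
      have hcard : ((m : ℤ) + 1) ≤ ∑ a ∈ Finset.Icc 1 (m+1), (gfun m a + gfun m (m + 2 - a)) := by
        calc ((m : ℤ) + 1) = ∑ _a ∈ Finset.Icc 1 (m+1), (1 : ℤ) := by
              simp [Nat.Icc_eq_range', mul_comm]
          _ ≤ _ := Finset.sum_le_sum hpair
      rw [hsum]
      omega
end

section
/- The tropical curve defined by a tropical polynomial (the non-differentiability locus of T) is a closed subset of ℝ² with empty interior, provided the monomials of T are pairwise distinct affine functions. -/
/-!
A maximum `T` of finitely many affine functions is differentiable at `x` exactly when all the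
pieces attaining the maximum at `x` have the same linear part: then `T` coincides near `x` with
one of them, while the linear parts of any two active pieces would both have to be the
derivative of `T` at `x`, since `T` minus an active piece has a local minimum there. Hence the
differentiability locus is open, and the non-differentiability locus is contained in the finitely
many hyperplanes where two pieces with different linear parts agree.
-/

open Set Filter Topology

variable {E ι : Type*} [NormedAddCommGroup E] [NormedSpace ℝ E]

theorem interior_biUnion_finset_eq_empty {X : Type*} [TopologicalSpace X] (s : Finset ι)
    {f : ι → Set X} (hclosed : ∀ i ∈ s, IsClosed (f i)) (hint : ∀ i ∈ s, interior (f i) = ∅) :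
    interior (⋃ i ∈ s, f i) = ∅ := by
  classical
  induction s using Finset.induction_on with
  | empty => simp
  | insert i s _ ih =>
    simp only [Finset.mem_insert, forall_eq_or_imp] at hclosed hint
    rw [Finset.set_biUnion_insert,
      interior_union_isClosed_of_interior_empty hclosed.1 (ih hclosed.2 hint.2), hint.1]

theorem interior_setOf_affine_eq_eq_empty {φ ψ : E →L[ℝ] ℝ} (h : φ ≠ ψ) (b c : ℝ) :
    interior {x | φ x + b = ψ x + c} = ∅ := by
  refine eq_empty_of_forall_notMem fun x hx => h ?_
  have heq : (fun y => φ y + b) =ᶠ[𝓝 x] fun y => ψ y + c := mem_interior_iff_mem_nhds.mp hx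
  exact (φ.hasFDerivAt.add_const b).unique
    ((ψ.hasFDerivAt.add_const c).congr_of_eventuallyEq heq)

noncomputable def affineSup (s : Finset ι) (hs : s.Nonempty) (a : ι → E →L[ℝ] ℝ) (b : ι → ℝ)
    (x : E) : ℝ :=
  s.sup' hs fun i => a i x + b i

namespace affineSup

variable {s : Finset ι} {hs : s.Nonempty} {a : ι → E →L[ℝ] ℝ} {b : ι → ℝ} {i : ι} {x : E}

theorem le_apply (hi : i ∈ s) (x : E) : a i x + b i ≤ affineSup s hs a b x :=
  Finset.le_sup' (fun i => a i x + b i) hi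

theorem exists_apply_eq (x : E) : ∃ i ∈ s, affineSup s hs a b x = a i x + b i :=
  Finset.exists_mem_eq_sup' hs _

theorem fderiv_eq (hd : DifferentiableAt ℝ (affineSup s hs a b) x) (hi : i ∈ s)
    (hact : affineSup s hs a b x = a i x + b i) : fderiv ℝ (affineSup s hs a b) x = a i := by
  have hmin : IsLocalMin (fun y => affineSup s hs a b y - (a i y + b i)) x :=
    Eventually.of_forall fun y => by
      simpa only [hact, sub_self, sub_nonneg] using le_apply hi y
  exact sub_eq_zero.mp
    (hmin.hasFDerivAt_eq_zero (hd.hasFDerivAt.sub ((a i).hasFDerivAt.add_const (b i))))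

theorem eventuallyEq (hi : i ∈ s) (hact : affineSup s hs a b x = a i x + b i)
    (hlin : ∀ j ∈ s, affineSup s hs a b x = a j x + b j → a j = a i) :
    affineSup s hs a b =ᶠ[𝓝 x] fun y => a i y + b i := by
  have hle : ∀ j ∈ s, ∀ᶠ y in 𝓝 x, a j y + b j ≤ a i y + b i := by
    intro j hj
    by_cases hjact : affineSup s hs a b x = a j x + b j
    · have ha := hlin j hj hjact
      have hb : b j = b i := by rw [ha] at hjact; linarith
      exact Eventually.of_forall fun y => by rw [ha, hb]
    · have hlt : a j x + b j < a i x + b i :=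
        (hact ▸ le_apply hj x).lt_of_ne fun h => hjact (hact.trans h.symm)
      exact ((a j).continuous.add continuous_const).continuousAt.eventually_lt
        ((a i).continuous.add continuous_const).continuousAt hlt |>.mono fun _ => le_of_lt
  filter_upwards [(eventually_all_finset s).2 hle] with y hy
  exact le_antisymm (Finset.sup'_le hs _ hy) (le_apply hi y)

theorem differentiableAt_iff :
    DifferentiableAt ℝ (affineSup s hs a b) x ↔ ∀ i ∈ s, ∀ j ∈ s,
      affineSup s hs a b x = a i x + b i → affineSup s hs a b x = a j x + b j → a i = a j := by
  constructor
  · intro hd i hi j hj hacti hactj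
    rw [← fderiv_eq hd hi hacti, fderiv_eq hd hj hactj]
  · intro hlin
    obtain ⟨i, hi, hact⟩ := exists_apply_eq (hs := hs) (a := a) (b := b) x
    exact ((a i).differentiableAt.add_const (b i)).congr_of_eventuallyEq
      (eventuallyEq hi hact fun j hj hactj => hlin j hj i hi hactj hact)

theorem isOpen_setOf_differentiableAt :
    IsOpen {x | DifferentiableAt ℝ (affineSup s hs a b) x} := by
  refine isOpen_iff_mem_nhds.2 fun x hx => ?_
  obtain ⟨i, hi, hact⟩ := exists_apply_eq (hs := hs) (a := a) (b := b) x
  have heq := eventuallyEq hi hact fun j hj hactj => differentiableAt_iff.1 hx j hj i hi hactj hact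
  filter_upwards [heq.eventuallyEq_nhds] with y hy
  exact ((a i).differentiableAt.add_const (b i)).congr_of_eventuallyEq hy

theorem interior_setOf_not_differentiableAt :
    interior {x | ¬ DifferentiableAt ℝ (affineSup s hs a b) x} = ∅ := by
  classical
  set P := (s ×ˢ s).filter fun p => a p.1 ≠ a p.2
  have hsub : {x | ¬ DifferentiableAt ℝ (affineSup s hs a b) x} ⊆
      ⋃ p ∈ P, {x | a p.1 x + b p.1 = a p.2 x + b p.2} := by
    intro x (hx : ¬ DifferentiableAt ℝ _ x)
    rw [differentiableAt_iff] at hx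
    push Not at hx
    obtain ⟨i, hi, j, hj, hacti, hactj, hne⟩ := hx
    exact mem_biUnion (x := (i, j)) (Finset.mem_filter.2 ⟨Finset.mem_product.2 ⟨hi, hj⟩, hne⟩)
      (hacti.symm.trans hactj)
  refine eq_empty_of_subset_empty ((interior_mono hsub).trans ?_)
  exact (interior_biUnion_finset_eq_empty P
    (fun p _ => isClosed_eq (by fun_prop) (by fun_prop))
    fun p hp => interior_setOf_affine_eq_eq_empty (Finset.mem_filter.1 hp).2 _ _).subset

end affineSup

theorem tropical_curve_closed_empty_interior_general (Δ : Finset (ℤ × ℤ)) (hΔ : Δ.Nonempty)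
    (c : ℤ × ℤ → ℝ) (T : ℝ × ℝ → ℝ)
    (hT : ∀ p : ℝ × ℝ, T p = Δ.sup' hΔ (fun ij => (ij.1 : ℝ) * p.1 + (ij.2 : ℝ) * p.2 + c ij)) :
    IsClosed {p : ℝ × ℝ | ¬ DifferentiableAt ℝ T p} ∧
    interior {p : ℝ × ℝ | ¬ DifferentiableAt ℝ T p} = ∅ := by
  have hT' : T = affineSup Δ hΔ (fun ij => (ij.1 : ℝ) • ContinuousLinearMap.fst ℝ ℝ ℝ +
      (ij.2 : ℝ) • ContinuousLinearMap.snd ℝ ℝ ℝ) c := by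
    funext p
    simp [hT, affineSup]
  subst hT'
  exact ⟨affineSup.isOpen_setOf_differentiableAt.isClosed_compl,
    affineSup.interior_setOf_not_differentiableAt⟩

/-- The tropical curve (non-differentiability locus) of a tropical polynomial whose
monomials are pairwise distinct affine functions is a closed subset of `ℝ²` with
empty interior. -/
theorem tropical_curve_closed_empty_interior (Δ : Finset (ℤ × ℤ)) (hΔ : Δ.Nonempty)
    (c : ℤ × ℤ → ℝ) (T : ℝ × ℝ → ℝ)
    (hT : ∀ p : ℝ × ℝ, T p = Δ.sup' hΔ (fun ij => (ij.1 : ℝ) * p.1 + (ij.2 : ℝ) * p.2 + c ij))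
    (hdist : ∀ ij ∈ Δ, ∀ kl ∈ Δ, ij ≠ kl →
      (fun p : ℝ × ℝ => (ij.1 : ℝ) * p.1 + (ij.2 : ℝ) * p.2 + c ij) ≠
      (fun p : ℝ × ℝ => (kl.1 : ℝ) * p.1 + (kl.2 : ℝ) * p.2 + c kl)) :
    IsClosed {p : ℝ × ℝ | ¬ DifferentiableAt ℝ T p} ∧
    interior {p : ℝ × ℝ | ¬ DifferentiableAt ℝ T p} = ∅ :=
  tropical_curve_closed_empty_interior_general Δ hΔ c T hT
end
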